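/- There do not exist integers a, b, c₁, c₂, c₃ with 1 ≤ a ≤ 2 such that 2ab = c₁² + c₂² + c₃² and 6 = 2a − 2b − (c₁ + c₂ + c₃). -/
import Mathlib

theorem stmt_0 :
    ¬ ∃ (a b c₁ c₂ c₃ : ℤ), 1 ≤ a ∧ a ≤ 2 ∧
      2 * a * b = c₁ ^ 2 + c₂ ^ 2 + c₃ ^ 2 ∧
      6 = 2 * a - 2 * b - (c₁ + c₂ + c₃) := by
  rintro ⟨a, b, c₁, c₂, c₃, h1, h2, h3, h4⟩
  interval_cases a
  · nlinarith [sq_nonneg (2*c₁+1), sq_nonneg (2*c₂+1), sq_nonneg (2*c₃+1)]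
  · nlinarith [sq_nonneg (c₁+1), sq_nonneg (c₂+1), sq_nonneg (c₃+1)]
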